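/- Let p be an odd prime, λ a bar partition of n with p̄-weight w, and π a bar partition of n lying in D_n^- whose parts divisible by p correspond to the first component π^0 of its p̄-quotient. If Ψ(π) is the bar partition with the same p̄-quotient as π but p̄-core γ', then the p-adic valuations agree: v_p(π_1 ⋯ π_r) = v_p(π'_1 ⋯ π'_{r'}), where π = (π_1,…,π_r) and Ψ(π) = (π'_1,…,π'_{r'}). -/

import Mathlib

open scoped BigOperators

/-- `IsBarRemovalLeg q X Y l`: the bar partition `Y` is obtained from the bar partition `X`
(both encoded as finite sets of distinct positive parts) by removing a single `q`-bar of
leg length `l`: either decrease a part `a > q` to `a - q` (when `a - q` is not a part),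
with leg the number of parts strictly between `a - q` and `a`; or remove a part equal to
`q`, with leg the number of parts smaller than `q`; or remove two distinct parts
`a > b` with `a + b = q`, with leg `b` plus the number of parts strictly between `b`
and `a`. -/
def IsBarRemovalLeg (q : ℕ) (X Y : Finset ℕ) (l : ℕ) : Prop :=
  (∃ a ∈ X, q < a ∧ a - q ∉ X ∧ Y = insert (a - q) (X.erase a) ∧
    l = (X.filter (fun c => a - q < c ∧ c < a)).card) ∨
  (q ∈ X ∧ Y = X.erase q ∧ l = (X.filter (fun c => 0 < c ∧ c < q)).card) ∨
  (∃ a b, a ∈ X ∧ b ∈ X ∧ b < a ∧ a + b = q ∧ Y = (X.erase a).erase b ∧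
    l = b + (X.filter (fun c => b < c ∧ c < a)).card)

/-- `BarSeqL q X ls Y`: `Y` is obtained from `X` by successively removing `q`-bars whose
leg lengths are recorded in the list `ls`. -/
def BarSeqL (q : ℕ) : Finset ℕ → List ℕ → Finset ℕ → Prop
  | X, [], Y => Y = X
  | X, l :: ls, Y => ∃ Z, IsBarRemovalLeg q X Z l ∧ BarSeqL q Z ls Y

/-- `Y` is a `q̄`-core: no `q`-bar can be removed from it. -/
def IsBarCore (q : ℕ) (Y : Finset ℕ) : Prop := ∀ Z l, ¬ IsBarRemovalLeg q Y Z l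

/-- The partition (as a weakly decreasing function listing the parts) whose set of
(distinct) parts is `S`. -/
def partsOf (S : Finset ℕ) : ℕ → ℕ := fun i =>
  if i < S.card then (S.sort (· ≤ ·)).getD (S.card - 1 - i) 0 else 0

/-- The partition whose β-set is the finite set `X`. -/
def ofBeta (X : Finset ℕ) : ℕ → ℕ := fun i =>
  if i < X.card then (X.sort (· ≤ ·)).getD (X.card - 1 - i) 0 - (X.card - 1 - i) else 0

/-- The `i`-th component of the `p̄`-quotient of the bar partition `X`:
for `i = 0`, the bar partition whose parts are the parts of `X` divisible by `p`, divided
by `p`; for `1 ≤ i ≤ (p-1)/2`, the ordinary partition determined (via β-sets on the doubled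
runner) by the parts congruent to `i` and to `p - i` modulo `p`. -/
def barQuot (p : ℕ) (X : Finset ℕ) : ℕ → (ℕ → ℕ) := fun i =>
  if i = 0 then partsOf ((X.filter (fun a => p ∣ a)).image (fun a => a / p))
  else
    ofBeta ((((X.filter (fun a => a % p = i)).image
        (fun a => (X.sup id + X.card + 1) + a / p)) ∪
      (((Finset.range (p * (X.sup id + X.card + 1))).filter
          (fun b => b % p = (p - i) % p ∧ b ∉ X)).image
        (fun b => (X.sup id + X.card + 1) - 1 - b / p))))

/-- Two bar partitions have the same `p̄`-quotient. -/
def SameBarQuot (p : ℕ) (X X' : Finset ℕ) : Prop :=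
  ∀ i ≤ (p - 1) / 2, barQuot p X i = barQuot p X' i

/-!
Only the parts of `π` divisible by `p` contribute to `v_p(π_1 ⋯ π_r)`, and these are exactly
`p` times the parts of `π^0`. Since `Ψ` preserves the `p̄`-quotient, hence `π^0`, it preserves
the parts divisible by `p`, and therefore the valuation.
-/

lemma mem_iff_mem_range_partsOf {S : Finset ℕ} (h0 : 0 ∉ S) (a : ℕ) :
    a ∈ S ↔ a ≠ 0 ∧ a ∈ Set.range (partsOf S) := by
  have hlen : (S.sort (· ≤ ·)).length = S.card := Finset.length_sort _
  constructor
  · intro ha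
    refine ⟨fun h => h0 (h ▸ ha), ?_⟩
    obtain ⟨k, hk, hka⟩ := List.mem_iff_getElem.mp ((Finset.mem_sort (· ≤ ·)).mpr ha)
    refine ⟨S.card - 1 - k, ?_⟩
    rw [partsOf, if_pos (by omega), show S.card - 1 - (S.card - 1 - k) = k by omega,
      List.getD_eq_getElem _ _ hk, hka]
  · rintro ⟨ha, i, rfl⟩
    unfold partsOf at ha ⊢
    split_ifs at ha ⊢ with hi
    · rw [List.getD_eq_getElem _ _ (by omega)]
      exact (Finset.mem_sort (· ≤ ·)).mp (List.getElem_mem _)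
    · exact absurd rfl ha

lemma eq_of_partsOf_eq {S S' : Finset ℕ} (h0 : 0 ∉ S) (h0' : 0 ∉ S')
    (h : partsOf S = partsOf S') : S = S' := by
  ext a
  rw [mem_iff_mem_range_partsOf h0, mem_iff_mem_range_partsOf h0', h]

/-- The parts of the component `π^0` of the `p̄`-quotient, as a set. -/
def barQuotZero (p : ℕ) (X : Finset ℕ) : Finset ℕ :=
  (X.filter (fun a => p ∣ a)).image (fun a => a / p)

lemma barQuot_zero (p : ℕ) (X : Finset ℕ) : barQuot p X 0 = partsOf (barQuotZero p X) := rfl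

lemma zero_notMem_barQuotZero {p : ℕ} {X : Finset ℕ} (h0 : 0 ∉ X) : 0 ∉ barQuotZero p X := by
  simp only [barQuotZero, Finset.mem_image, Finset.mem_filter, not_exists, not_and]
  intro a ha hdiv
  exact h0 (Nat.eq_zero_of_dvd_of_div_eq_zero ha.2 hdiv ▸ ha.1)

lemma barQuotZero_eq_of_sameBarQuot {p : ℕ} {X X' : Finset ℕ} (h0 : 0 ∉ X) (h0' : 0 ∉ X')
    (h : SameBarQuot p X X') : barQuotZero p X = barQuotZero p X' := by
  apply eq_of_partsOf_eq (zero_notMem_barQuotZero h0) (zero_notMem_barQuotZero h0')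
  rw [← barQuot_zero, ← barQuot_zero]
  exact h 0 (Nat.zero_le _)

lemma filter_dvd_eq_image_barQuotZero (p : ℕ) (X : Finset ℕ) :
    X.filter (fun a => p ∣ a) = (barQuotZero p X).image (fun b => p * b) := by
  ext a
  simp only [barQuotZero, Finset.image_image, Finset.mem_image, Finset.mem_filter,
    Function.comp_def]
  constructor
  · intro ha
    exact ⟨a, ha, Nat.mul_div_cancel' ha.2⟩
  · rintro ⟨c, hc, rfl⟩
    rw [Nat.mul_div_cancel' hc.2]
    exact hc

lemma padicValNat_prod_filter_dvd {p : ℕ} (hp : p.Prime) {X : Finset ℕ} (h0 : 0 ∉ X) :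
    padicValNat p (∏ a ∈ X.filter (fun a => p ∣ a), a) = padicValNat p (∏ a ∈ X, a) := by
  have := Fact.mk hp
  have hne : ∀ Y ⊆ X, ∏ a ∈ Y, a ≠ 0 :=
    fun Y hY => Finset.prod_ne_zero_iff.mpr fun a ha h => h0 (h ▸ hY ha)
  have hcoprime : ¬ p ∣ ∏ a ∈ X.filter (fun a => ¬ p ∣ a), a := by
    rw [Prime.dvd_finsetProd_iff hp.prime]
    rintro ⟨a, ha, hpa⟩
    exact (Finset.mem_filter.mp ha).2 hpa
  rw [← Finset.prod_filter_mul_prod_filter_not X (fun a => p ∣ a),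
    padicValNat.mul (hne _ (Finset.filter_subset _ _)) (hne _ (Finset.filter_subset _ _)),
    padicValNat.eq_zero_of_not_dvd hcoprime, add_zero]

theorem stmt_16_general (p : ℕ) (hp : p.Prime)
    (X X' : Finset ℕ) (h0 : 0 ∉ X) (h0' : 0 ∉ X')
    (hquot : SameBarQuot p X X') :
    padicValNat p (∏ a ∈ X, a) = padicValNat p (∏ a ∈ X', a) := by
  rw [← padicValNat_prod_filter_dvd hp h0, ← padicValNat_prod_filter_dvd hp h0',
    filter_dvd_eq_image_barQuotZero, filter_dvd_eq_image_barQuotZero,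
    barQuotZero_eq_of_sameBarQuot h0 h0' hquot]

/-- Let `p` be an odd prime and `π = (π_1,…,π_r)` a bar partition of `n`
in `D_n⁻` (distinct parts, an odd number of which are even), whose parts divisible by `p`
are encoded in the first component of its `p̄`-quotient.  If `Ψ(π)` is a bar partition with
the same `p̄`-quotient as `π` (but possibly a different `p̄`-core `γ'`), then
`v_p(π_1⋯π_r) = v_p(π'_1⋯π'_{r'})`. -/
theorem stmt_16 (p n : ℕ) (hp : p.Prime) (hpodd : Odd p)
    (X X' : Finset ℕ) (h0 : 0 ∉ X) (h0' : 0 ∉ X')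
    (hn : ∑ a ∈ X, a = n)
    (hD : Odd ((X.filter (fun a => Even a)).card))
    (hquot : SameBarQuot p X X') :
    padicValNat p (∏ a ∈ X, a) = padicValNat p (∏ a ∈ X', a) :=
  stmt_16_general p hp X X' h0 h0' hquot
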